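/- Let a ∈ PB be a basis of the integer polymatroid P. An index i ∈ [n] is externally active with respect to a if and only if there exists a nonempty subset I ⊆ [n] such that i = min(I) and I is tight for a. -/

import Mathlib

/-!
For `a_j ≥ 1`, the exchange `a + e_i - e_j` is again a basis unless some tight set contains `i`
but not `j`. By submodularity tight sets are closed under intersection, so there is a smallest
tight set `T ∋ i`. If `i` is externally active, every `j < i` in `T` therefore has `a_j = 0`, and by
monotonicity discarding these elements leaves `T` tight, now with minimum `i`. Conversely, a tight
set with minimum `i` blocks every exchange `a + e_i - e_j` with `j < i`.
-/

open Finset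

variable {n : ℕ}

/-- The set of bases of the integer polymatroid with rank function `f` on ground set `Fin n`:
integer vectors `a` with `a i ≥ 0`, `∑_{i ∈ I} a i ≤ f I` for every `I`, and `∑ i, a i = f [n]`.
(The upper bound `a i ≤ f {i}` used for the ambient finite set is implied by the constraints.) -/
noncomputable def PB (n : ℕ) (f : Finset (Fin n) → ℕ) : Finset (Fin n → ℤ) :=
  (Fintype.piFinset fun i : Fin n => Finset.Icc (0 : ℤ) (f {i})).filter fun a =>
    (∀ I : Finset (Fin n), ∑ j ∈ I, a j ≤ (f I : ℤ)) ∧ ∑ j, a j = (f Finset.univ : ℤ)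

/-- A set `I` is tight for `a` if `∑_{i ∈ I} a i = f I`. -/
def Tight (f : Finset (Fin n) → ℕ) (a : Fin n → ℤ) (I : Finset (Fin n)) : Prop :=
  ∑ i ∈ I, a i = (f I : ℤ)

/-- `i` is internally active with respect to `a`: `a - e_i + e_j ∉ PB` for every `j < i`. -/
def IntAct (f : Finset (Fin n) → ℕ) (a : Fin n → ℤ) (i : Fin n) : Prop :=
  ∀ j : Fin n, j < i → a - Pi.single i 1 + Pi.single j 1 ∉ PB n f

/-- `i` is externally active with respect to `a`: `a + e_i - e_j ∉ PB` for every `j < i`. -/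
def ExtAct (f : Finset (Fin n) → ℕ) (a : Fin n → ℤ) (i : Fin n) : Prop :=
  ∀ j : Fin n, j < i → a + Pi.single i 1 - Pi.single j 1 ∉ PB n f

open scoped Classical in
/-- `Int(a)`: the set of internally active indices. -/
noncomputable def IntSet (f : Finset (Fin n) → ℕ) (a : Fin n → ℤ) : Finset (Fin n) :=
  Finset.univ.filter fun i => IntAct f a i

open scoped Classical in
/-- `Ext(a)`: the set of externally active indices. -/
noncomputable def ExtSet (f : Finset (Fin n) → ℕ) (a : Fin n → ℤ) : Finset (Fin n) :=
  Finset.univ.filter fun i => ExtAct f a i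

/-- `ι(a) = |Int(a)|`, the internal activity. -/
noncomputable def iota (f : Finset (Fin n) → ℕ) (a : Fin n → ℤ) : ℕ := (IntSet f a).card

/-- `ε(a) = |Ext(a)|`, the external activity. -/
noncomputable def eps (f : Finset (Fin n) → ℕ) (a : Fin n → ℤ) : ℕ := (ExtSet f a).card

section Polymatroid

variable {f : Finset (Fin n) → ℕ} {a : Fin n → ℤ}

lemma mem_PB_iff :
    a ∈ PB n f ↔ (∀ k, 0 ≤ a k) ∧ (∀ I : Finset (Fin n), ∑ j ∈ I, a j ≤ (f I : ℤ)) ∧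
      ∑ j, a j = (f univ : ℤ) := by
  simp only [PB, mem_filter, Fintype.mem_piFinset, mem_Icc]
  constructor
  · rintro ⟨hbox, hle, hsum⟩
    exact ⟨fun k => (hbox k).1, hle, hsum⟩
  · rintro ⟨hpos, hle, hsum⟩
    exact ⟨fun k => ⟨hpos k, by simpa using hle {k}⟩, hle, hsum⟩

lemma sum_add_single_sub_single (i j : Fin n) (I : Finset (Fin n)) :
    ∑ k ∈ I, (a + Pi.single i 1 - Pi.single j 1 : Fin n → ℤ) k =
      ∑ k ∈ I, a k + (if i ∈ I then 1 else 0) - (if j ∈ I then 1 else 0) := by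
  simp only [Pi.sub_apply, Pi.add_apply, sum_sub_distrib, sum_add_distrib, sum_pi_single']

lemma Tight.inter (hsub : ∀ I J : Finset (Fin n), f (I ∪ J) + f (I ∩ J) ≤ f I + f J)
    (hle : ∀ I : Finset (Fin n), ∑ j ∈ I, a j ≤ (f I : ℤ))
    {I J : Finset (Fin n)} (hI : Tight f a I) (hJ : Tight f a J) : Tight f a (I ∩ J) := by
  have hsubℤ : (f (I ∪ J) : ℤ) + f (I ∩ J) ≤ f I + f J := by exact_mod_cast hsub I J
  have hsplit := sum_union_inter (s₁ := I) (s₂ := J) (f := a)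
  unfold Tight at *
  linarith [hle (I ∪ J), hle (I ∩ J)]

lemma Tight.of_subset (hmono : ∀ I J : Finset (Fin n), I ⊆ J → f I ≤ f J)
    (hle : ∀ I : Finset (Fin n), ∑ j ∈ I, a j ≤ (f I : ℤ)) {I T : Finset (Fin n)}
    (hT : Tight f a T) (hIT : I ⊆ T) (hzero : ∀ j ∈ T, j ∉ I → a j = 0) : Tight f a I := by
  have hfI : (f I : ℤ) ≤ f T := by exact_mod_cast hmono I T hIT
  have hsum := sum_subset hIT hzero
  unfold Tight at *
  linarith [hle I]

lemma Tight.mem_of_add_single_sub_single_mem_PB {i j : Fin n} {I : Finset (Fin n)}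
    (hI : Tight f a I) (hiI : i ∈ I) (hb : a + Pi.single i 1 - Pi.single j 1 ∈ PB n f) :
    j ∈ I := by
  by_contra hjI
  have hle := (mem_PB_iff.mp hb).2.1 I
  rw [sum_add_single_sub_single, hI] at hle
  simp [hiI, hjI] at hle

lemma add_single_sub_single_mem_PB (ha : a ∈ PB n f) {i j : Fin n} (haj : 1 ≤ a j)
    (hsep : ∀ I, Tight f a I → i ∈ I → j ∈ I) : a + Pi.single i 1 - Pi.single j 1 ∈ PB n f := by
  obtain ⟨hpos, hle, hsum⟩ := mem_PB_iff.mp ha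
  refine mem_PB_iff.mpr ⟨fun k => ?_, fun I => ?_, ?_⟩
  · simp only [Pi.sub_apply, Pi.add_apply, Pi.single_apply]
    split_ifs <;> subst_vars <;> linarith [hpos k]
  · have hsepI := hsep I
    rw [sum_add_single_sub_single]
    split_ifs with hiI hjI <;> unfold Tight at hsepI <;> grind [hle I]
  · rw [sum_add_single_sub_single, hsum]
    simp

open scoped Classical in
noncomputable def minTight (f : Finset (Fin n) → ℕ) (a : Fin n → ℤ) (i : Fin n) :
    Finset (Fin n) :=
  (univ.filter fun S => Tight f a S ∧ i ∈ S).inf id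

lemma mem_minTight (i : Fin n) : i ∈ minTight f a i := by
  classical
  simp +contextual [minTight, mem_inf]

lemma minTight_subset {i : Fin n} {S : Finset (Fin n)} (hS : Tight f a S) (hiS : i ∈ S) :
    minTight f a i ⊆ S := by
  classical
  exact inf_le (f := id) (mem_filter.mpr ⟨mem_univ S, hS, hiS⟩)

lemma tight_minTight (hsub : ∀ I J : Finset (Fin n), f (I ∪ J) + f (I ∩ J) ≤ f I + f J)
    (ha : a ∈ PB n f) (i : Fin n) : Tight f a (minTight f a i) := by
  classical
  obtain ⟨-, hle, hsum⟩ := mem_PB_iff.mp ha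
  exact inf_induction hsum (fun _ h₁ _ h₂ => h₁.inter hsub hle h₂)
    fun S hS => (mem_filter.mp hS).2.1

lemma eq_zero_of_mem_minTight (ha : a ∈ PB n f) {i j : Fin n} (hext : ExtAct f a i)
    (hji : j < i) (hj : j ∈ minTight f a i) : a j = 0 := by
  by_contra haj
  have haj : 1 ≤ a j := by have := (mem_PB_iff.mp ha).1 j; omega
  refine hext j hji (add_single_sub_single_mem_PB ha haj fun I hI hiI => ?_)
  exact minTight_subset hI hiI hj

end Polymatroid

theorem externallyActive_iff_general
    (n : ℕ) (f : Finset (Fin n) → ℕ)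
    (hmono : ∀ I J : Finset (Fin n), I ⊆ J → f I ≤ f J)
    (hsub : ∀ I J : Finset (Fin n), f (I ∪ J) + f (I ∩ J) ≤ f I + f J)
    (a : Fin n → ℤ) (ha : a ∈ PB n f) (i : Fin n) :
    ExtAct f a i ↔
      ∃ I : Finset (Fin n), i ∈ I ∧ (∀ j ∈ I, i ≤ j) ∧ Tight f a I := by
  constructor
  · intro hext
    refine ⟨(minTight f a i).filter (i ≤ ·), mem_filter.mpr ⟨mem_minTight i, le_rfl⟩,
      fun j hj => (mem_filter.mp hj).2, ?_⟩
    refine (tight_minTight hsub ha i).of_subset hmono (mem_PB_iff.mp ha).2.1 (filter_subset _ _)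
      fun j hj hjI => eq_zero_of_mem_minTight ha hext ?_ hj
    simpa [hj] using hjI
  · rintro ⟨I, hiI, hmin, hI⟩ j hji hb
    exact (hji.trans_le (hmin _ (hI.mem_of_add_single_sub_single_mem_PB hiI hb))).false

/-- `i` is externally active w.r.t. `a` iff there is a (nonempty) subset `I` with
`i = min I` that is tight for `a`. -/
theorem externallyActive_iff
    (n : ℕ) (hn : 0 < n) (f : Finset (Fin n) → ℕ)
    (hf0 : f ∅ = 0)
    (hmono : ∀ I J : Finset (Fin n), I ⊆ J → f I ≤ f J)
    (hsub : ∀ I J : Finset (Fin n), f (I ∪ J) + f (I ∩ J) ≤ f I + f J)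
    (a : Fin n → ℤ) (ha : a ∈ PB n f) (i : Fin n) :
    ExtAct f a i ↔
      ∃ I : Finset (Fin n), i ∈ I ∧ (∀ j ∈ I, i ≤ j) ∧ Tight f a I :=
  externallyActive_iff_general n f hmono hsub a ha i
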